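/- Let (X, ω) be a symplectic vector space over 𝕂 ∈ {ℝ, ℂ}, let (λ, μ) be a Fredholm pair of Lagrangian subspaces of index 0, and let V be a finite-dimensional subspace of X such that X = V ⊕ (λ + μ) (i.e. V + λ + μ = X and V ∩ (λ + μ) = {0}). Then X = V ⊕ (V^ω ∩ λ) ⊕ μ and X = V ⊕ λ ⊕ (V^ω ∩ μ), i.e. in each case the three subspaces are mutually independent and span X. -/
import Mathlib


/-- The ω-annihilator of a linear subspace:
`V^ω = {x ∈ X : ω(x, y) = 0 for all y ∈ V}`. -/
def omegaAnn {𝕂 : Type*} [Field 𝕂] {X : Type*} [AddCommGroup X] [Module 𝕂 X]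
    (ω : X →ₗ[𝕂] X →ₗ[𝕂] 𝕂) (V : Submodule 𝕂 X) : Submodule 𝕂 X where
  carrier := {x | ∀ y ∈ V, ω x y = 0}
  zero_mem' := by intro y hy; simp
  add_mem' := by
    intro a b ha hb y hy
    simp only [map_add, LinearMap.add_apply, ha y hy, hb y hy, add_zero]
  smul_mem' := by
    intro c a ha y hy
    simp only [map_smul, LinearMap.smul_apply, ha y hy, smul_zero]

lemma mem_omegaAnn {𝕂 : Type*} [Field 𝕂] {X : Type*} [AddCommGroup X] [Module 𝕂 X]
    (ω : X →ₗ[𝕂] X →ₗ[𝕂] 𝕂) (V : Submodule 𝕂 X) (x : X) :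
    x ∈ omegaAnn ω V ↔ ∀ y ∈ V, ω x y = 0 := Iff.rfl

/-- Let `(X, ω)` be a symplectic vector space over `𝕂 ∈ {ℝ, ℂ}`, `(l, m)` a Fredholm pair of
Lagrangian subspaces of index `0`, and `V` a finite-dimensional subspace such that
`X = V ⊕ (l + m)`. Then `X = V ⊕ (V^ω ∩ l) ⊕ m` and `X = V ⊕ l ⊕ (V^ω ∩ m)`, i.e. in each
case the three subspaces are mutually independent and span `X`. -/
theorem condition_decomposition
    {𝕂 : Type*} [RCLike 𝕂] {X : Type*} [AddCommGroup X] [Module 𝕂 X]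
    (ω : X →ₗ[𝕂] X →ₗ[𝕂] 𝕂)
    (hskew : ∀ x y, ω x y = - ω y x)
    (hnondeg : ∀ x, (∀ y, ω x y = 0) → x = 0)
    (l m : Submodule 𝕂 X)
    (hl : omegaAnn ω l = l) (hm : omegaAnn ω m = m)
    (hfin₁ : FiniteDimensional 𝕂 ↥(l ⊓ m))
    (hfin₂ : FiniteDimensional 𝕂 (X ⧸ (l ⊔ m)))
    (hindex : Module.finrank 𝕂 ↥(l ⊓ m) = Module.finrank 𝕂 (X ⧸ (l ⊔ m)))
    (V : Submodule 𝕂 X) (hVfin : FiniteDimensional 𝕂 ↥V)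
    (hspan : V ⊔ (l ⊔ m) = ⊤) (hdisj : V ⊓ (l ⊔ m) = ⊥) :
    (V ⊔ (omegaAnn ω V ⊓ l) ⊔ m = ⊤
      ∧ V ⊓ ((omegaAnn ω V ⊓ l) ⊔ m) = ⊥
      ∧ (omegaAnn ω V ⊓ l) ⊓ (V ⊔ m) = ⊥
      ∧ m ⊓ (V ⊔ (omegaAnn ω V ⊓ l)) = ⊥)
    ∧ (V ⊔ l ⊔ (omegaAnn ω V ⊓ m) = ⊤
      ∧ V ⊓ (l ⊔ (omegaAnn ω V ⊓ m)) = ⊥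
      ∧ l ⊓ (V ⊔ (omegaAnn ω V ⊓ m)) = ⊥
      ∧ (omegaAnn ω V ⊓ m) ⊓ (V ⊔ l) = ⊥) := by
  -- Lagrangian annihilation
  have hll : ∀ x ∈ l, ∀ y ∈ l, ω x y = 0 := by
    intro x hx; rw [← hl] at hx; exact hx
  have hmm : ∀ x ∈ m, ∀ y ∈ m, ω x y = 0 := by
    intro x hx; rw [← hm] at hx; exact hm ▸ hx
  -- key: (l ⊓ m) ∩ V^ω = 0
  have hkey : ∀ x, x ∈ l → x ∈ m → (∀ v ∈ V, ω x v = 0) → x = 0 := by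
    intro x hxl hxm hxV
    apply hnondeg
    intro y
    have hy : y ∈ V ⊔ (l ⊔ m) := by rw [hspan]; trivial
    rcases Submodule.mem_sup.mp hy with ⟨v, hv, w, hw, rfl⟩
    rcases Submodule.mem_sup.mp hw with ⟨a, ha, b, hb, rfl⟩
    simp only [map_add]
    rw [hxV v hv, hll x hxl a ha, hmm x hxm b hb]
    ring
  -- the pairing map  l⊓m → Dual V
  set φ : ↥(l ⊓ m) →ₗ[𝕂] Module.Dual 𝕂 ↥V :=
    (ω.compl₂ V.subtype).comp (l ⊓ m).subtype with hφ
  have hφinj : Function.Injective φ := by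
    rw [← LinearMap.ker_eq_bot]
    rw [Submodule.eq_bot_iff]
    rintro ⟨x, hx⟩ hxk
    have hxk' : ∀ v ∈ V, ω x v = 0 := by
      intro v hv
      have := congrFun (congrArg DFunLike.coe (LinearMap.mem_ker.mp hxk)) ⟨v, hv⟩
      simpa [hφ] using this
    have : x = 0 := hkey x hx.1 hx.2 hxk'
    simp [this]
  have hcompl : IsCompl V (l ⊔ m) := ⟨disjoint_iff.mpr hdisj, codisjoint_iff.mpr hspan⟩
  have hrank : Module.finrank 𝕂 ↥(l ⊓ m) = Module.finrank 𝕂 (Module.Dual 𝕂 ↥V) := by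
    rw [hindex, Subspace.dual_finrank_eq]
    exact (Submodule.quotientEquivOfIsCompl _ _ hcompl.symm).finrank_eq
  have hφsurj : Function.Surjective φ :=
    (LinearMap.injective_iff_surjective_of_finrank_eq_finrank hrank).mp hφinj
  -- splitting lemma: any x with given pairing against V splits off an l⊓m part
  have hsplit : ∀ x : X, ∃ z, z ∈ l ∧ z ∈ m ∧ ∀ v ∈ V, ω (x - z) v = 0 := by
    intro x
    obtain ⟨z, hz⟩ := hφsurj ((ω.compl₂ V.subtype) x)
    refine ⟨z.1, z.2.1, z.2.2, ?_⟩
    intro v hv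
    have := congrFun (congrArg DFunLike.coe hz) ⟨v, hv⟩
    simp only [hφ, LinearMap.comp_apply, LinearMap.compl₂_apply,
      Submodule.subtype_apply] at this
    simp only [map_sub, LinearMap.sub_apply, this, sub_self]
  -- membership in omegaAnn is definitional
  have hmemAnn : ∀ x : X, (∀ v ∈ V, ω x v = 0) → x ∈ omegaAnn ω V := fun x h => h
  -- V ∩ (l ⊔ m) = 0, pointwise version
  have hdisj' : ∀ v ∈ V, v ∈ l ⊔ m → v = 0 := by
    intro v hv hv'
    have : v ∈ V ⊓ (l ⊔ m) := ⟨hv, hv'⟩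
    rwa [hdisj, Submodule.mem_bot] at this
  constructor
  · refine ⟨?_, ?_, ?_, ?_⟩
    · rw [eq_top_iff]
      intro x _
      have hx : x ∈ V ⊔ (l ⊔ m) := by rw [hspan]; trivial
      rcases Submodule.mem_sup.mp hx with ⟨v, hv, w, hw, rfl⟩
      rcases Submodule.mem_sup.mp hw with ⟨a, ha, b, hb, rfl⟩
      obtain ⟨z, hzl, hzm, hz⟩ := hsplit a
      have h1 : v + (a - z) ∈ V ⊔ (omegaAnn ω V ⊓ l) :=
        Submodule.mem_sup.mpr ⟨v, hv, a - z, ⟨hmemAnn _ hz, l.sub_mem ha hzl⟩, rfl⟩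
      have h2 : z + b ∈ m := m.add_mem hzm hb
      have : (v + (a - z)) + (z + b) ∈ V ⊔ (omegaAnn ω V ⊓ l) ⊔ m :=
        Submodule.add_mem_sup h1 h2
      convert this using 1
      abel
    · rw [Submodule.eq_bot_iff]
      rintro x ⟨hxV, hx⟩
      have hle : (omegaAnn ω V ⊓ l) ⊔ m ≤ l ⊔ m :=
        sup_le (le_trans inf_le_right le_sup_left) le_sup_right
      exact hdisj' x hxV (hle hx)
    · rw [Submodule.eq_bot_iff]
      rintro x ⟨⟨hxA, hxl⟩, hx⟩
      rcases Submodule.mem_sup.mp hx with ⟨v, hv, b, hb, hvb⟩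
      have hveq : v = x - b := by rw [← hvb]; abel
      have hv0 : v = 0 := hdisj' v hv (by
        rw [hveq]
        exact Submodule.sub_mem _ (Submodule.mem_sup_left hxl) (Submodule.mem_sup_right hb))
      have hxb : x = b := by rw [← hvb, hv0, zero_add]
      exact hkey x hxl (hxb ▸ hb) hxA
    · rw [Submodule.eq_bot_iff]
      rintro x ⟨hxm, hx⟩
      rcases Submodule.mem_sup.mp hx with ⟨v, hv, a, ⟨haA, hal⟩, hva⟩
      have hveq : v = x - a := by rw [← hva]; abel
      have hv0 : v = 0 := hdisj' v hv (by
        rw [hveq]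
        exact Submodule.sub_mem _ (Submodule.mem_sup_right hxm) (Submodule.mem_sup_left hal))
      have hxa : x = a := by rw [← hva, hv0, zero_add]
      exact hkey x (hxa ▸ hal) hxm (hxa ▸ haA)
  · refine ⟨?_, ?_, ?_, ?_⟩
    · rw [eq_top_iff]
      intro x _
      have hx : x ∈ V ⊔ (l ⊔ m) := by rw [hspan]; trivial
      rcases Submodule.mem_sup.mp hx with ⟨v, hv, w, hw, rfl⟩
      rcases Submodule.mem_sup.mp hw with ⟨a, ha, b, hb, rfl⟩
      obtain ⟨z, hzl, hzm, hz⟩ := hsplit b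
      have h1 : v + (a + z) ∈ V ⊔ l :=
        Submodule.add_mem_sup hv (l.add_mem ha hzl)
      have h2 : b - z ∈ omegaAnn ω V ⊓ m := ⟨hmemAnn _ hz, m.sub_mem hb hzm⟩
      have : (v + (a + z)) + (b - z) ∈ V ⊔ l ⊔ (omegaAnn ω V ⊓ m) :=
        Submodule.add_mem_sup h1 h2
      convert this using 1
      abel
    · rw [Submodule.eq_bot_iff]
      rintro x ⟨hxV, hx⟩
      have hle : l ⊔ (omegaAnn ω V ⊓ m) ≤ l ⊔ m :=
        sup_le le_sup_left (le_trans inf_le_right le_sup_right)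
      exact hdisj' x hxV (hle hx)
    · rw [Submodule.eq_bot_iff]
      rintro x ⟨hxl, hx⟩
      rcases Submodule.mem_sup.mp hx with ⟨v, hv, b, ⟨hbA, hbm⟩, hvb⟩
      have hveq : v = x - b := by rw [← hvb]; abel
      have hv0 : v = 0 := hdisj' v hv (by
        rw [hveq]
        exact Submodule.sub_mem _ (Submodule.mem_sup_left hxl) (Submodule.mem_sup_right hbm))
      have hxb : x = b := by rw [← hvb, hv0, zero_add]
      exact hkey x hxl (hxb ▸ hbm) (hxb ▸ hbA)
    · rw [Submodule.eq_bot_iff]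
      rintro x ⟨⟨hxA, hxm⟩, hx⟩
      rcases Submodule.mem_sup.mp hx with ⟨v, hv, a, ha, hva⟩
      have hveq : v = x - a := by rw [← hva]; abel
      have hv0 : v = 0 := hdisj' v hv (by
        rw [hveq]
        exact Submodule.sub_mem _ (Submodule.mem_sup_right hxm) (Submodule.mem_sup_left ha))
      have hxa : x = a := by rw [← hva, hv0, zero_add]
      exact hkey x (hxa ▸ ha) hxm hxA
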